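/- For the M-Grid dissemination BQS with n = k² parties and b ≤ √n − 1, where quorums are unions of r = √(b/2+1) rows and r columns, any two quorums intersect in more than b parties; hence the consistency property holds with respect to the threshold fail-prone system of all sets of size at most b. -/

import Mathlib

/-!
If the two quorums share a row, that whole row (`k` parties) lies in their intersection.
Otherwise their row sets are disjoint, and the blocks `R₁ × C₂` and `R₂ × C₁` are disjoint
subsets of the intersection, giving `2r² = b + 2` parties. Either way the intersection has more
than `b` parties, so no set of size at most `b` contains it.
-/

open Finset

namespace MGrid

variable {α β : Type*} [Fintype α] [Fintype β] [DecidableEq α] [DecidableEq β]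

def gridQuorum (R : Finset α) (C : Finset β) : Finset (α × β) :=
  univ.filter fun p => p.1 ∈ R ∨ p.2 ∈ C

@[simp]
theorem mem_gridQuorum {R : Finset α} {C : Finset β} {p : α × β} :
    p ∈ gridQuorum R C ↔ p.1 ∈ R ∨ p.2 ∈ C := by
  simp [gridQuorum]

theorem card_le_card_inter_gridQuorum_of_mem {R₁ R₂ : Finset α} (C₁ C₂ : Finset β) {i : α}
    (hi₁ : i ∈ R₁) (hi₂ : i ∈ R₂) :
    Fintype.card β ≤ #(gridQuorum R₁ C₁ ∩ gridQuorum R₂ C₂) := by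
  have hrow : (univ : Finset β).map ⟨Prod.mk i, Prod.mk_right_injective i⟩ ⊆
      gridQuorum R₁ C₁ ∩ gridQuorum R₂ C₂ := by
    intro p hp
    obtain ⟨j, -, rfl⟩ := mem_map.mp hp
    simp [hi₁, hi₂]
  simpa using card_le_card hrow

theorem card_mul_add_card_mul_le_card_inter_gridQuorum {R₁ R₂ : Finset α} (C₁ C₂ : Finset β)
    (hR : Disjoint R₁ R₂) :
    #R₁ * #C₂ + #R₂ * #C₁ ≤ #(gridQuorum R₁ C₁ ∩ gridQuorum R₂ C₂) := by
  have hblocks : R₁ ×ˢ C₂ ∪ R₂ ×ˢ C₁ ⊆ gridQuorum R₁ C₁ ∩ gridQuorum R₂ C₂ := by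
    intro p hp
    rcases mem_union.mp hp with hp | hp <;>
      · rw [mem_product] at hp
        simp [hp]
  have hdisj : Disjoint (R₁ ×ˢ C₂) (R₂ ×ˢ C₁) := disjoint_product.mpr (Or.inl hR)
  calc #R₁ * #C₂ + #R₂ * #C₁ = #(R₁ ×ˢ C₂ ∪ R₂ ×ˢ C₁) := by
        rw [card_union_of_disjoint hdisj, card_product, card_product]
    _ ≤ _ := card_le_card hblocks

theorem min_le_card_inter_gridQuorum (R₁ R₂ : Finset α) (C₁ C₂ : Finset β) :
    min (Fintype.card β) (#R₁ * #C₂ + #R₂ * #C₁) ≤ #(gridQuorum R₁ C₁ ∩ gridQuorum R₂ C₂) := by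
  by_cases hR : Disjoint R₁ R₂
  · exact min_le_of_right_le (card_mul_add_card_mul_le_card_inter_gridQuorum C₁ C₂ hR)
  · obtain ⟨i, hi₁, hi₂⟩ := not_disjoint_iff.mp hR
    exact min_le_of_left_le (card_le_card_inter_gridQuorum_of_mem C₁ C₂ hi₁ hi₂)

end MGrid

open MGrid in
/-- For the M-Grid dissemination BQS with `n = k²` parties and
`b ≤ √n − 1`, where quorums are unions of `r = √(b/2+1)` rows and `r` columns,
any two quorums intersect in more than `b` parties, hence consistency holds with
respect to the fail-prone system of all sets of size at most `b`. -/
theorem mgrid_consistency (k r b : ℕ) (hr : 1 ≤ r) (hrk : r ≤ k)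
    (hrb : 2 * r ^ 2 = b + 2) (hbk : b ≤ k - 1)
    (R1 C1 R2 C2 : Finset (Fin k))
    (hR1 : R1.card = r) (hC1 : C1.card = r) (hR2 : R2.card = r) (hC2 : C2.card = r) :
    b < ((Finset.univ.filter (fun p : Fin k × Fin k => p.1 ∈ R1 ∨ p.2 ∈ C1)) ∩
        (Finset.univ.filter (fun p : Fin k × Fin k => p.1 ∈ R2 ∨ p.2 ∈ C2))).card ∧
    ∀ F : Finset (Fin k × Fin k), F.card ≤ b →
      ¬ ((Finset.univ.filter (fun p : Fin k × Fin k => p.1 ∈ R1 ∨ p.2 ∈ C1)) ∩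
          (Finset.univ.filter (fun p : Fin k × Fin k => p.1 ∈ R2 ∨ p.2 ∈ C2)) ⊆ F) := by
  change b < #(gridQuorum R1 C1 ∩ gridQuorum R2 C2) ∧
    ∀ F : Finset (Fin k × Fin k), #F ≤ b → ¬ gridQuorum R1 C1 ∩ gridQuorum R2 C2 ⊆ F
  have hbound := min_le_card_inter_gridQuorum R1 R2 C1 C2
  rw [Fintype.card_fin, hR1, hC1, hR2, hC2] at hbound
  have hlt : b < #(gridQuorum R1 C1 ∩ gridQuorum R2 C2) := by
    have hb : b < min k (r * r + r * r) := lt_min (by omega) (by nlinarith)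
    exact hb.trans_le hbound
  exact ⟨hlt, fun F hF hsub => (card_le_card hsub).not_gt (hF.trans_lt hlt)⟩
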